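/- arXiv:1203.3936 — 3 statements merged into one kernel-verified Lean document; each statement's English description precedes it below -/
import Mathlib

section
/- Let F ∈ Σ₀ and let N = exp(F). Then for every η ∈ [0,1), the power series G(t) = N(t)/N(ηt) has constant coefficient 1 and all higher-order coefficients strictly positive (i.e., G ∈ Σ). Equivalently, exp(F) belongs to Σ₊. -/
open PowerSeries Finset

/-- Σ₀: zero constant term, positive linear coefficient, nonnegative higher coefficients. -/
def Sigma0 : Set (PowerSeries ℝ) :=
  {F | PowerSeries.coeff 0 F = 0 ∧ 0 < PowerSeries.coeff 1 F ∧
    ∀ n, 2 ≤ n → 0 ≤ PowerSeries.coeff n F}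

/-- Σ: constant term 1 and all higher coefficients strictly positive. -/
def SigmaSet : Set (PowerSeries ℝ) :=
  {N | PowerSeries.coeff 0 N = 1 ∧ ∀ n, 1 ≤ n → 0 < PowerSeries.coeff n N}

/-- Formal exponential of a power series (valid when F has zero constant term). -/
noncomputable def expPS (F : PowerSeries ℝ) : PowerSeries ℝ :=
  PowerSeries.mk fun n =>
    ∑ k ∈ Finset.range (n + 1), PowerSeries.coeff n (F ^ k) / (Nat.factorial k)

/-- G_{N,η}(t) = N(t)/N(ηt). -/
noncomputable def Gfun (N : PowerSeries ℝ) (η : ℝ) : PowerSeries ℝ :=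
  N * (PowerSeries.rescale η N)⁻¹

/-- Σ₊ = { N ∈ Σ : ∀ η ∈ [0,1), G_{N,η} ∈ Σ }. -/
noncomputable def SigmaPlus : Set (PowerSeries ℝ) :=
  {N | N ∈ SigmaSet ∧ ∀ η ∈ Set.Ico (0 : ℝ) 1, Gfun N η ∈ SigmaSet}

lemma coeff_pow_eq_zero' {A : PowerSeries ℝ} (hA : constantCoeff A = 0)
    {k n : ℕ} (h : n < k) : coeff n (A ^ k) = 0 := by
  have hX : (X : PowerSeries ℝ) ∣ A := X_dvd_iff.mpr hA
  have hXk : (X : PowerSeries ℝ) ^ k ∣ A ^ k := pow_dvd_pow_of_dvd hX k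
  exact (X_pow_dvd_iff.mp hXk) n h

lemma coeff_expPS' (A : PowerSeries ℝ) (hA : constantCoeff A = 0) {n m : ℕ} (h : n ≤ m) :
    coeff n (expPS A) = ∑ k ∈ range (m+1), coeff n (A^k) / (Nat.factorial k) := by
  rw [expPS, coeff_mk]
  apply Finset.sum_subset
  · intro x hx; simp only [mem_range] at *; omega
  · intro x hx hx2
    simp only [mem_range] at hx hx2
    rw [coeff_pow_eq_zero' hA (by omega), zero_div]

lemma expPS_add' {A B : PowerSeries ℝ} (hA : constantCoeff A = 0)
    (hB : constantCoeff B = 0) :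
    expPS (A + B) = expPS A * expPS B := by
  ext n
  set f : ℕ → ℕ → ℝ :=
    fun k l => coeff n (A ^ k * B ^ l) / ((Nat.factorial k : ℝ) * (Nat.factorial l : ℝ))
    with hf
  have hf0 : ∀ k l, n < k + l → f k l = 0 := by
    intro k l h
    have hX : (X : PowerSeries ℝ) ^ (k + l) ∣ A ^ k * B ^ l := by
      rw [pow_add]
      exact mul_dvd_mul (pow_dvd_pow_of_dvd (X_dvd_iff.mpr hA) k)
        (pow_dvd_pow_of_dvd (X_dvd_iff.mpr hB) l)
    simp [hf, (X_pow_dvd_iff.mp hX) n h]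
  have hRHS : coeff n (expPS A * expPS B)
      = ∑ k ∈ range (n+1), ∑ l ∈ range (n+1), f k l := by
    rw [coeff_mul]
    calc ∑ p ∈ antidiagonal n, coeff p.1 (expPS A) * coeff p.2 (expPS B)
        = ∑ p ∈ antidiagonal n, ∑ k ∈ range (n+1), ∑ l ∈ range (n+1),
            coeff p.1 (A ^ k) * coeff p.2 (B ^ l)
              / ((Nat.factorial k : ℝ) * (Nat.factorial l : ℝ)) := by
          apply Finset.sum_congr rfl
          intro p hp
          have hpn := Finset.HasAntidiagonal.mem_antidiagonal.mp hp
          have h1 : p.1 ≤ n := by omega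
          have h2 : p.2 ≤ n := by omega
          rw [coeff_expPS' A hA h1, coeff_expPS' B hB h2, Finset.sum_mul_sum]
          apply Finset.sum_congr rfl; intro k _
          apply Finset.sum_congr rfl; intro l _
          rw [div_mul_div_comm]
      _ = ∑ k ∈ range (n+1), ∑ l ∈ range (n+1), f k l := by
          rw [Finset.sum_comm]
          apply Finset.sum_congr rfl; intro k _
          rw [Finset.sum_comm]
          apply Finset.sum_congr rfl; intro l _
          rw [hf]
          simp only
          rw [PowerSeries.coeff_mul, Finset.sum_div]
  have hLHS : coeff n (expPS (A + B))
      = ∑ m ∈ range (n+1), ∑ k ∈ range (m+1), f k (m - k) := by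
    rw [expPS, coeff_mk]
    apply Finset.sum_congr rfl
    intro m _
    rw [add_pow, map_sum, Finset.sum_div]
    apply Finset.sum_congr rfl
    intro k hk
    have hkm : k ≤ m := by simp only [mem_range] at hk; omega
    rw [← map_natCast (C : ℝ →+* PowerSeries ℝ) (m.choose k), coeff_mul_C]
    have hfact : (m.choose k : ℝ) * ((Nat.factorial k : ℝ) * (Nat.factorial (m - k) : ℝ))
        = (Nat.factorial m : ℝ) := by
      have := Nat.choose_mul_factorial_mul_factorial hkm
      push_cast [← this]
      ring
    rw [hf]
    simp only
    rw [div_eq_div_iff (by positivity) (by positivity)]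
    linear_combination (coeff n (A ^ k * B ^ (m - k))) * hfact
  have hsq : ∑ k ∈ range (n+1), ∑ l ∈ range (n+1), f k l
      = ∑ k ∈ range (n+1), ∑ l ∈ range (n+1-k), f k l := by
    apply Finset.sum_congr rfl
    intro k hk
    simp only [mem_range] at hk
    symm
    apply Finset.sum_subset
    · intro l hl; simp only [mem_range] at *; omega
    · intro l hl hl2
      simp only [mem_range] at hl hl2
      exact hf0 k l (by omega)
  have htri : ∑ m ∈ range (n+1), ∑ k ∈ range (m+1), f k (m - k)
      = ∑ k ∈ range (n+1), ∑ l ∈ range (n+1-k), f k l := by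
    rw [Finset.sum_sigma', Finset.sum_sigma']
    apply Finset.sum_nbij' (fun p => (⟨p.2, p.1 - p.2⟩ : Σ _ : ℕ, ℕ))
      (fun p => (⟨p.1 + p.2, p.1⟩ : Σ _ : ℕ, ℕ))
    · intro a ha
      simp only [Finset.mem_sigma, mem_range] at *
      omega
    · intro a ha
      simp only [Finset.mem_sigma, mem_range] at *
      omega
    · intro a ha
      simp only [Finset.mem_sigma, mem_range] at ha
      ext <;> simp <;> omega
    · intro a ha
      simp only [Finset.mem_sigma, mem_range] at ha
      ext <;> simp <;> omega
    · intro a ha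
      rfl
  rw [hLHS, hRHS, htri, hsq]

lemma coeff_nonneg_pow' {A : PowerSeries ℝ} (h : ∀ n, 0 ≤ coeff n A) (k : ℕ) :
    ∀ n, 0 ≤ coeff n (A ^ k) := by
  induction k with
  | zero =>
    intro n
    rw [pow_zero, PowerSeries.coeff_one]
    split_ifs <;> norm_num
  | succ k ih =>
    intro n
    rw [pow_succ, coeff_mul]
    apply Finset.sum_nonneg
    intro p _
    exact mul_nonneg (ih p.1) (h p.2)

lemma coeff_pow_self_pos' {A : PowerSeries ℝ} (h0 : ∀ n, 0 ≤ coeff n A)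
    (h1 : 0 < coeff 1 A) : ∀ n, 1 ≤ n → 0 < coeff n (A ^ n) := by
  intro n
  induction n with
  | zero => omega
  | succ n ih =>
    intro _
    rcases Nat.eq_zero_or_pos n with hn | hn
    · subst hn; simpa using h1
    · rw [pow_succ, coeff_mul]
      apply Finset.sum_pos'
      · intro p _
        exact mul_nonneg (coeff_nonneg_pow' h0 n p.1) (h0 p.2)
      · refine ⟨(n, 1), Finset.HasAntidiagonal.mem_antidiagonal.mpr rfl, ?_⟩
        exact mul_pos (ih hn) h1

lemma expPS_mem_Sigma' {A : PowerSeries ℝ} (hA : A ∈ Sigma0) : expPS A ∈ SigmaSet := by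
  obtain ⟨h0, h1, h2⟩ := hA
  have hnn : ∀ n, 0 ≤ coeff n A := by
    intro n
    match n with
    | 0 => simp [h0]
    | 1 => exact h1.le
    | (m+2) => exact h2 _ (by omega)
  constructor
  · rw [expPS, coeff_mk, Finset.sum_range_one, pow_zero]
    simp
  · intro n hn
    rw [expPS, coeff_mk]
    apply Finset.sum_pos'
    · intro k _
      exact div_nonneg (coeff_nonneg_pow' hnn k n) (by positivity)
    · refine ⟨n, by simp, ?_⟩
      exact div_pos (coeff_pow_self_pos' hnn h1 n hn)
        (by exact_mod_cast Nat.factorial_pos n)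

lemma rescale_expPS' (η : ℝ) (A : PowerSeries ℝ) :
    PowerSeries.rescale η (expPS A) = expPS (PowerSeries.rescale η A) := by
  ext n
  rw [coeff_rescale, expPS, expPS, coeff_mk, coeff_mk, Finset.mul_sum]
  apply Finset.sum_congr rfl
  intro k _
  rw [← map_pow, coeff_rescale, mul_div_assoc]

lemma sub_rescale_mem' {F : PowerSeries ℝ} (hF : F ∈ Sigma0) {η : ℝ}
    (hη : η ∈ Set.Ico (0 : ℝ) 1) : F - PowerSeries.rescale η F ∈ Sigma0 := by
  obtain ⟨h0, h1, h2⟩ := hF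
  obtain ⟨hη0, hη1⟩ := hη
  refine ⟨?_, ?_, ?_⟩
  · simp only [map_sub, coeff_rescale, pow_zero, one_mul, h0, sub_zero]
  · simp only [map_sub, coeff_rescale, pow_one]
    nlinarith
  · intro n hn
    simp only [map_sub, coeff_rescale]
    have hle : η ^ n ≤ 1 := pow_le_one₀ hη0 hη1.le
    have hge : 0 ≤ η ^ n := pow_nonneg hη0 n
    nlinarith [h2 n hn]

lemma constantCoeff_expPS' (A : PowerSeries ℝ) : constantCoeff (expPS A) = 1 := by
  rw [← coeff_zero_eq_constantCoeff, expPS, coeff_mk, Finset.sum_range_one, pow_zero]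
  simp

/-- For F ∈ Σ₀ and N = exp F, every G_{N,η} with η ∈ [0,1) belongs to Σ;
equivalently exp F ∈ Σ₊. -/
theorem stmt8 (F : PowerSeries ℝ) (hF : F ∈ Sigma0) :
    (∀ η ∈ Set.Ico (0 : ℝ) 1, expPS F * (PowerSeries.rescale η (expPS F))⁻¹ ∈ SigmaSet) ∧
    expPS F ∈ SigmaPlus := by
  have key : ∀ η ∈ Set.Ico (0 : ℝ) 1,
      expPS F * (PowerSeries.rescale η (expPS F))⁻¹ ∈ SigmaSet := by
    intro η hη
    have hH := sub_rescale_mem' hF hη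
    have hc0 : constantCoeff F = 0 := by
      rw [← coeff_zero_eq_constantCoeff]; exact hF.1
    have hc : constantCoeff (PowerSeries.rescale η F) = 0 := by
      rw [← coeff_zero_eq_constantCoeff, coeff_rescale]
      simp [hF.1]
    have hcH : constantCoeff (F - PowerSeries.rescale η F) = 0 := by
      rw [map_sub, hc, hc0, sub_zero]
    have hmul : expPS (F - PowerSeries.rescale η F) * expPS (PowerSeries.rescale η F)
        = expPS F := by
      rw [← expPS_add' hcH hc, sub_add_cancel]
    have hG : expPS F * (PowerSeries.rescale η (expPS F))⁻¹
        = expPS (F - PowerSeries.rescale η F) := by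
      rw [rescale_expPS', ← hmul, mul_assoc,
        PowerSeries.mul_inv_cancel _ (by rw [constantCoeff_expPS']; norm_num), mul_one]
    rw [hG]
    exact expPS_mem_Sigma' hH
  exact ⟨key, expPS_mem_Sigma' hF, key⟩
end

section
/- Let N ∈ Σ₊ with coefficients b_n, and define x_n = b_{n−1}/b_n for n ≥ 1, x_0 = 0. Then 0 ≤ x_n ≤ n·x_1 for all n ∈ ℕ. -/
open PowerSeries Finset

/-- For N ∈ Σ₊ with coefficients bₙ and xₙ = b_{n−1}/bₙ (x₀ = 0), one has 0 ≤ xₙ ≤ n·x₁. -/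
theorem stmt11 (N : PowerSeries ℝ) (hN : N ∈ SigmaPlus) (x : ℕ → ℝ)
    (hx0 : x 0 = 0)
    (hxs : ∀ n : ℕ, x (n + 1) = PowerSeries.coeff n N / PowerSeries.coeff (n + 1) N) :
    ∀ n : ℕ, 0 ≤ x n ∧ x n ≤ (n : ℝ) * x 1 := by
  obtain ⟨⟨hN0, hNpos⟩, hGmem⟩ := hN
  set b : ℕ → ℝ := fun n => PowerSeries.coeff n N with hb
  have hb0 : b 0 = 1 := hN0
  have hbpos : ∀ n, 0 < b n := by
    intro n
    cases n with
    | zero => rw [hb0]; norm_num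
    | succ m => exact hNpos _ (Nat.succ_le_succ (Nat.zero_le m))
  have key : ∀ m : ℕ, b 1 * b m ≤ (m + 1 : ℝ) * b (m + 1) := by
    intro m
    have step : ∀ η ∈ Set.Ico (0 : ℝ) 1,
        b 1 * (η ^ m * b m) ≤ (∑ j ∈ Finset.range (m + 1), η ^ j) * b (m + 1) := by
      intro η hη
      obtain ⟨hη0, hη1⟩ := hη
      obtain ⟨hg0, hgpos⟩ := hGmem η ⟨hη0, hη1⟩
      set G := Gfun N η with hGdef
      set g : ℕ → ℝ := fun k => PowerSeries.coeff k G with hg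
      have hgnn : ∀ k, 0 ≤ g k := by
        intro k
        cases k with
        | zero => rw [hg]; simp only; rw [hg0]; norm_num
        | succ j => exact (hgpos _ (Nat.succ_le_succ (Nat.zero_le j))).le
      have hc : PowerSeries.constantCoeff (PowerSeries.rescale η N) ≠ 0 := by
        have h1 : PowerSeries.constantCoeff (PowerSeries.rescale η N) = 1 := by
          rw [← PowerSeries.coeff_zero_eq_constantCoeff, PowerSeries.coeff_rescale]
          simp [hN0]
        rw [h1]; norm_num
      have hid : N = G * PowerSeries.rescale η N := by
        rw [hGdef]
        unfold Gfun
        rw [mul_assoc, PowerSeries.inv_mul_cancel _ hc, mul_one]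
      have hco : ∀ n : ℕ, b n = ∑ k ∈ Finset.range (n + 1), g k * (η ^ (n - k) * b (n - k)) := by
        intro n
        conv_lhs => rw [hb]; simp only; rw [hid]
        rw [PowerSeries.coeff_mul, Finset.Nat.sum_antidiagonal_eq_sum_range_succ_mk]
        apply Finset.sum_congr rfl
        intro k _
        rw [PowerSeries.coeff_rescale]
      have hg1 : g 1 = b 1 - η * b 1 := by
        have h1 := hco 1
        rw [Finset.sum_range_succ, Finset.sum_range_one] at h1
        simp only [Nat.sub_self, Nat.sub_zero, pow_zero, pow_one] at h1
        have hg00 : g 0 = 1 := hg0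
        rw [hg00, hb0] at h1
        linarith
      have hlow : g 0 * (η ^ (m + 1) * b (m + 1)) + g 1 * (η ^ m * b m) ≤ b (m + 1) := by
        conv_rhs => rw [hco (m + 1)]
        have hsub : ({0, 1} : Finset ℕ) ⊆ Finset.range (m + 2) := by
          intro k hk
          simp only [Finset.mem_insert, Finset.mem_singleton] at hk
          rcases hk with h | h <;> simp [h, Finset.mem_range]
        have hnn : ∀ k ∈ Finset.range (m + 2), k ∉ ({0, 1} : Finset ℕ) →
            0 ≤ g k * (η ^ (m + 1 - k) * b (m + 1 - k)) := by
          intro k _ _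
          exact mul_nonneg (hgnn k) (mul_nonneg (pow_nonneg hη0 _) (hbpos _).le)
        have := Finset.sum_le_sum_of_subset_of_nonneg hsub hnn
        rw [Finset.sum_insert (by norm_num), Finset.sum_singleton] at this
        simpa using this
      have hg00 : g 0 = 1 := hg0
      rw [hg00, one_mul, hg1] at hlow
      have hgeom : (1 - η) * (∑ j ∈ Finset.range (m + 1), η ^ j) = 1 - η ^ (m + 1) := by
        linear_combination -geom_sum_mul η (m + 1)
      have h1η : 0 < 1 - η := by linarith
      have hfin : (1 - η) * (b 1 * (η ^ m * b m)) ≤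
          (1 - η) * ((∑ j ∈ Finset.range (m + 1), η ^ j) * b (m + 1)) := by
        have hre : (1 - η) * ((∑ j ∈ Finset.range (m + 1), η ^ j) * b (m + 1)) =
            (1 - η ^ (m + 1)) * b (m + 1) := by rw [← mul_assoc, hgeom]
        rw [hre]
        nlinarith [hlow]
      exact le_of_mul_le_mul_left hfin h1η
    -- limit η → 1⁻
    have hne : (nhdsWithin (1 : ℝ) (Set.Ico (0 : ℝ) 1)).NeBot := by
      refine mem_closure_iff_nhdsWithin_neBot.1 ?_
      rw [closure_Ico (by norm_num : (0 : ℝ) ≠ 1)]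
      exact Set.right_mem_Icc.2 (by norm_num)
    set f : ℝ → ℝ := fun η => (∑ j ∈ Finset.range (m + 1), η ^ j) * b (m + 1) - b 1 * (η ^ m * b m)
      with hf
    have hcont : Continuous f := by
      apply Continuous.sub
      · exact (continuous_finset_sum _ fun j _ => continuous_pow j).mul continuous_const
      · exact continuous_const.mul ((continuous_pow m).mul continuous_const)
    have htend : Filter.Tendsto f (nhdsWithin (1 : ℝ) (Set.Ico (0 : ℝ) 1)) (nhds (f 1)) :=
      (hcont.tendsto 1).mono_left nhdsWithin_le_nhds
    have hev : ∀ᶠ η in nhdsWithin (1 : ℝ) (Set.Ico (0 : ℝ) 1), (0 : ℝ) ≤ f η := by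
      filter_upwards [eventually_mem_nhdsWithin] with η hη
      exact sub_nonneg.2 (step η hη)
    have hf1 : 0 ≤ f 1 := ge_of_tendsto htend hev
    rw [hf] at hf1
    simp only [one_pow, Finset.sum_const, Finset.card_range, nsmul_eq_mul, mul_one] at hf1
    push_cast at hf1 ⊢
    linarith
  intro n
  cases n with
  | zero =>
    constructor
    · rw [hx0]
    · rw [hx0]; norm_num
  | succ k =>
    have hx1 : x 1 = 1 / b 1 := by rw [hxs 0]; rw [show PowerSeries.coeff 0 N = 1 from hN0]
    have hxk : x (k + 1) = b k / b (k + 1) := hxs k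
    constructor
    · rw [hxk]
      exact div_nonneg (hbpos k).le (hbpos (k + 1)).le
    · rw [hxk, hx1, div_le_iff₀ (hbpos (k + 1))]
      push_cast
      rw [mul_one_div, div_mul_eq_mul_div, le_div_iff₀ (hbpos 1)]
      nlinarith [key k]
end

section
/- For N(t) = exp(t + (a/2)t²) with a > 0, writing N(t) = Σ_n t^n/x_n!, the factorials are x_n! = (Σ_{m=0}^{⌊n/2⌋} (a/2)^m/(m!(n−2m)!))^{−1}, and the sequence x_n = x_n!/x_{n−1}! satisfies the recursion x_{n+1} = (n+1)/(1 + a x_n) with x_1 = 1. -/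
open PowerSeries Finset

noncomputable def Sa (c : ℝ) (n : ℕ) : ℝ :=
  ∑ m ∈ Finset.range (n / 2 + 1),
    c ^ m / ((Nat.factorial m : ℝ) * (Nat.factorial (n - 2 * m) : ℝ))

lemma aux1 (c : ℝ) (hc : c ≠ 0) (k m : ℕ) :
    ((1 + Polynomial.C c * Polynomial.X) ^ k).coeff m = c ^ m * (k.choose m : ℝ) := by
  have h : (1 + Polynomial.C c * Polynomial.X)
      = Polynomial.C c * (Polynomial.X + Polynomial.C c⁻¹) := by
    rw [mul_add, ← Polynomial.C_mul, mul_inv_cancel₀ hc, Polynomial.C_1, add_comm]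
  rw [h, mul_pow, ← Polynomial.C_pow, Polynomial.coeff_C_mul, Polynomial.coeff_X_add_C_pow]
  rcases le_or_gt m k with hmk | hmk
  · rw [inv_pow, ← mul_assoc, ← pow_sub₀ _ hc (Nat.sub_le k m), Nat.sub_sub_self hmk]
  · simp [Nat.choose_eq_zero_of_lt hmk]

lemma aux2 (c : ℝ) (hc : c ≠ 0) (k n : ℕ) :
    PowerSeries.coeff n ((PowerSeries.X + PowerSeries.C c * PowerSeries.X ^ 2) ^ k)
      = if k ≤ n then c ^ (n - k) * (k.choose (n - k) : ℝ) else 0 := by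
  have h : (PowerSeries.X + PowerSeries.C c * PowerSeries.X ^ 2)
      = ((Polynomial.X + Polynomial.C c * Polynomial.X ^ 2 : Polynomial ℝ) : PowerSeries ℝ) := by
    simp
  rw [h, ← Polynomial.coe_pow, Polynomial.coeff_coe]
  have h2 : (Polynomial.X + Polynomial.C c * Polynomial.X ^ 2 : Polynomial ℝ) ^ k
      = Polynomial.X ^ k * (1 + Polynomial.C c * Polynomial.X) ^ k := by
    rw [← mul_pow]; ring_nf
  rw [h2, Polynomial.coeff_X_pow_mul', aux1 c hc]

lemma aux3 (c : ℝ) (hc : 0 < c) (n : ℕ) :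
    PowerSeries.coeff n (expPS (PowerSeries.X + PowerSeries.C c * PowerSeries.X ^ 2))
      = Sa c n := by
  have hc' := hc.ne'
  rw [expPS, PowerSeries.coeff_mk, Sa]
  set g : ℕ → ℝ := fun j => c ^ j * (((n - j).choose j : ℕ) : ℝ) / ((n - j).factorial : ℝ)
    with hg
  have step1 : ∑ k ∈ Finset.range (n + 1),
      PowerSeries.coeff n ((PowerSeries.X + PowerSeries.C c * PowerSeries.X ^ 2) ^ k)
        / (Nat.factorial k : ℝ)
      = ∑ k ∈ Finset.range (n + 1), g (n + 1 - 1 - k) := by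
    refine Finset.sum_congr rfl fun k hk => ?_
    have hkn : k ≤ n := by simpa [Nat.lt_succ_iff] using hk
    rw [aux2 c hc', if_pos hkn, hg]
    simp only [show n + 1 - 1 - k = n - k from by omega, Nat.sub_sub_self hkn]
  rw [step1, Finset.sum_range_reflect g (n + 1)]
  rw [← Finset.sum_subset (Finset.range_subset_range.2 (by omega : n / 2 + 1 ≤ n + 1))
    (fun m hm hm2 => ?_)]
  · refine Finset.sum_congr rfl fun m hm => ?_
    have h2m : 2 * m ≤ n := by
      have := Finset.mem_range.1 hm; omega
    have hmm : m ≤ n - m := by omega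
    rw [hg]
    simp only []
    rw [Nat.cast_choose ℝ hmm, show n - m - m = n - 2 * m by omega]
    have f1 : ((n - m).factorial : ℝ) ≠ 0 := Nat.cast_ne_zero.2 (Nat.factorial_ne_zero _)
    have f2 : ((m).factorial : ℝ) ≠ 0 := Nat.cast_ne_zero.2 (Nat.factorial_ne_zero _)
    have f3 : ((n - 2 * m).factorial : ℝ) ≠ 0 := Nat.cast_ne_zero.2 (Nat.factorial_ne_zero _)
    field_simp
  · have hlt : n - m < m := by
      have h1 := Finset.mem_range.1 hm
      have h2 : ¬ m < n / 2 + 1 := fun h => hm2 (Finset.mem_range.2 h)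
      omega
    simp [hg, Nat.choose_eq_zero_of_lt hlt]

lemma Sa_pos (c : ℝ) (hc : 0 < c) (n : ℕ) : 0 < Sa c n := by
  refine Finset.sum_pos (fun m hm => ?_) ⟨0, Finset.mem_range.2 (by omega)⟩
  exact div_pos (pow_pos hc m) (by positivity)

lemma Sa_rec (c : ℝ) (n : ℕ) :
    ((n : ℝ) + 2) * Sa c (n + 2) = Sa c (n + 1) + 2 * c * Sa c n := by
  have hrange : (n + 2) / 2 + 1 = n / 2 + 2 := by omega
  rw [Sa, Sa, Sa, hrange, Finset.mul_sum]
  have split : ∀ m ∈ Finset.range (n / 2 + 2),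
      ((n : ℝ) + 2) * (c ^ m / ((Nat.factorial m : ℝ) * (Nat.factorial (n + 2 - 2 * m) : ℝ)))
        = ((n + 2 - 2 * m : ℕ) : ℝ)
            * (c ^ m / ((Nat.factorial m : ℝ) * (Nat.factorial (n + 2 - 2 * m) : ℝ)))
          + ((2 * m : ℕ) : ℝ)
            * (c ^ m / ((Nat.factorial m : ℝ) * (Nat.factorial (n + 2 - 2 * m) : ℝ))) := by
    intro m hm
    have h2m : 2 * m ≤ n + 2 := by have := Finset.mem_range.1 hm; omega
    rw [← add_mul]
    congr 1
    rw [Nat.cast_sub h2m]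
    push_cast
    ring
  rw [Finset.sum_congr rfl split, Finset.sum_add_distrib]
  congr 1
  · rw [← Finset.sum_subset (Finset.range_subset_range.2 (by omega : (n + 1) / 2 + 1 ≤ n / 2 + 2))
      (fun m hm hm2 => ?_)]
    · refine Finset.sum_congr rfl fun m hm => ?_
      have h2m : 2 * m ≤ n + 1 := by have := Finset.mem_range.1 hm; omega
      rw [show n + 2 - 2 * m = (n + 1 - 2 * m) + 1 by omega, Nat.factorial_succ]
      set q := n + 1 - 2 * m with hq
      have f1 : ((q).factorial : ℝ) ≠ 0 := Nat.cast_ne_zero.2 (Nat.factorial_ne_zero _)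
      have f2 : ((m).factorial : ℝ) ≠ 0 := Nat.cast_ne_zero.2 (Nat.factorial_ne_zero _)
      push_cast
      have hq1 : ((q : ℝ) + 1) ≠ 0 := by positivity
      field_simp
    · rw [show n + 2 - 2 * m = 0 by
        have h1 := Finset.mem_range.1 hm
        have h2 : ¬ m < (n + 1) / 2 + 1 := fun h => hm2 (Finset.mem_range.2 h)
        omega]
      simp
  · rw [Finset.sum_range_succ']
    simp only [Nat.mul_zero, Nat.cast_zero, zero_mul, add_zero, pow_zero]
    rw [Finset.mul_sum]
    refine Finset.sum_congr rfl fun m hm => ?_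
    rw [show n + 2 - 2 * (m + 1) = n - 2 * m by omega, Nat.factorial_succ]
    have f1 : ((n - 2 * m).factorial : ℝ) ≠ 0 := Nat.cast_ne_zero.2 (Nat.factorial_ne_zero _)
    have f2 : ((m).factorial : ℝ) ≠ 0 := Nat.cast_ne_zero.2 (Nat.factorial_ne_zero _)
    push_cast
    have hm1 : ((m : ℝ) + 1) ≠ 0 := by positivity
    field_simp
    ring

lemma Sa_zero (c : ℝ) : Sa c 0 = 1 := by simp [Sa]

lemma Sa_one (c : ℝ) : Sa c 1 = 1 := by simp [Sa]

/-- Example 3: N(t) = exp(t + (a/2)t²). -/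
theorem stmt19 (a : ℝ) (ha : 0 < a)
    (N : PowerSeries ℝ)
    (hN : N = expPS (PowerSeries.X + PowerSeries.C (a / 2) * PowerSeries.X ^ 2))
    (xfact : ℕ → ℝ) (hxfact : ∀ n, xfact n = (PowerSeries.coeff n N)⁻¹)
    (x : ℕ → ℝ) (hx0 : x 0 = 0) (hxs : ∀ n : ℕ, x (n + 1) = xfact (n + 1) / xfact n) :
    (∀ n : ℕ, xfact n =
      (∑ m ∈ Finset.range (n / 2 + 1),
        (a / 2) ^ m / ((Nat.factorial m : ℝ) * (Nat.factorial (n - 2 * m) : ℝ)))⁻¹) ∧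
    x 1 = 1 ∧
    (∀ n : ℕ, x (n + 1) = ((n : ℝ) + 1) / (1 + a * x n)) := by
  have hc : (0 : ℝ) < a / 2 := by linarith
  have hxf : ∀ n, xfact n = (Sa (a / 2) n)⁻¹ := by
    intro n
    rw [hxfact n, hN, aux3 (a / 2) hc n]
  have hx1 : x 1 = 1 := by
    rw [hxs 0, hxf 1, hxf 0, Sa_zero, Sa_one]
    norm_num
  refine ⟨fun n => by rw [hxf n, Sa], hx1, fun n => ?_⟩
  cases n with
  | zero => rw [hx1, hx0]; norm_num
  | succ m =>
    have S0 := Sa_pos (a / 2) hc m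
    have S1 := Sa_pos (a / 2) hc (m + 1)
    have S2 := Sa_pos (a / 2) hc (m + 2)
    have key : ((m : ℝ) + 2) * Sa (a / 2) (m + 2) = Sa (a / 2) (m + 1) + a * Sa (a / 2) m := by
      have h := Sa_rec (a / 2) m
      rw [show 2 * (a / 2) = a by ring] at h
      exact h
    rw [hxs (m + 1), hxs m, hxf (m + 2), hxf (m + 1), hxf m]
    have hden : 0 < 1 + a * ((Sa (a / 2) (m + 1))⁻¹ / (Sa (a / 2) m)⁻¹) := by positivity
    rw [div_eq_div_iff (by positivity) hden.ne']
    push_cast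
    field_simp
    nlinarith [key, mul_pos S0 S1, mul_pos S0 S2]
end
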